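/- arXiv:2201.06621 — 5 statements merged into one kernel-verified Lean document; each statement's English description precedes it below -/
import Mathlib

section
/- The maximum total weight of a 2-disjoint matching is at most twice the maximum weight of a single matching. Consequently, computing a maximum-weight matching, removing its edges, and computing a second maximum-weight matching in the remaining graph yields a 2-disjoint matching whose weight is at least half the optimum 2-disjoint matching weight. -/
open Finset

variable {V : Type*}

/-- A matching of a simple graph `G`: a finite set of edges of `G` such that
no two distinct edges share a vertex. -/
def IsMatching (G : SimpleGraph V) (M : Finset (Sym2 V)) : Prop :=
  (∀ e ∈ M, e ∈ G.edgeSet) ∧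
  ∀ e ∈ M, ∀ f ∈ M, e ≠ f → ∀ v, v ∈ e → v ∉ f

/-- A `k`-disjoint matching: `k` pairwise edge-disjoint matchings of `G`. -/
def IsKDisjointMatching (G : SimpleGraph V) (k : ℕ)
    (Ms : Fin k → Finset (Sym2 V)) : Prop :=
  (∀ i, IsMatching G (Ms i)) ∧ Pairwise fun i j => Disjoint (Ms i) (Ms j)

/-- The weight of a set of edges. -/
def mweight (w : Sym2 V → ℕ) (M : Finset (Sym2 V)) : ℕ := ∑ e ∈ M, w e

/-- A proper edge coloring with `k` colors of the edge set `F`: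
edges sharing a vertex receive distinct colors. -/
def ProperColoringOn (k : ℕ) (F : Finset (Sym2 V)) (c : Sym2 V → Fin k) : Prop :=
  ∀ e ∈ F, ∀ f ∈ F, e ≠ f → (∃ x, x ∈ e ∧ x ∈ f) → c e ≠ c f

/-- The weight of any 2-disjoint matching is at most twice the maximum
weight of a single matching; consequently, taking a maximum-weight matching `M1`,
removing its edges, and taking a maximum-weight matching `M2` of the rest yields a
2-disjoint matching of at least half the optimum weight. -/
theorem iterative_two_disjoint_half_approx (G : SimpleGraph V) (w : Sym2 V → ℕ)
    (M1 : Finset (Sym2 V)) (hM1 : IsMatching G M1)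
    (hM1max : ∀ M, IsMatching G M → mweight w M ≤ mweight w M1)
    (M2 : Finset (Sym2 V)) (hM2 : IsMatching G M2) (hdisj : Disjoint M1 M2)
    (hM2max : ∀ M, IsMatching G M → Disjoint M1 M → mweight w M ≤ mweight w M2) :
    (∀ N1 N2 : Finset (Sym2 V), IsMatching G N1 → IsMatching G N2 → Disjoint N1 N2 →
      mweight w N1 + mweight w N2 ≤ 2 * mweight w M1) ∧
    (∀ N1 N2 : Finset (Sym2 V), IsMatching G N1 → IsMatching G N2 → Disjoint N1 N2 →
      mweight w N1 + mweight w N2 ≤ 2 * (mweight w M1 + mweight w M2)) := by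
  have h1 : ∀ N1 N2 : Finset (Sym2 V), IsMatching G N1 → IsMatching G N2 → Disjoint N1 N2 →
      mweight w N1 + mweight w N2 ≤ 2 * mweight w M1 := by
    intro N1 N2 hN1 hN2 _
    have := hM1max N1 hN1
    have := hM1max N2 hN2
    omega
  exact ⟨h1, fun N1 N2 hN1 hN2 hd => le_trans (h1 N1 N2 hN1 hN2 hd) (by omega)⟩
end

section
/- Let G be the graph on six vertices consisting of a triangle {a, b, c} where each triangle vertex is additionally joined to its own private degree-one vertex, with all edge weights equal to 1. Then for k = 3, the optimal 3-disjoint matching has total weight 6 (it covers all edges), but the unique maximum-weight matching of G consists exactly of the three pendant edges, and after removing these edges every matching in the remaining triangle has size at most 1; hence the iterative approach (repeatedly removing a maximum-weight matching) achieves total weight at most 5 < 6. -/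
open Finset

set_option maxRecDepth 100000
set_option maxHeartbeats 4000000

variable {V : Type*}

/-- The six edges: a triangle on `0,1,2` plus a private pendant edge at each
triangle vertex (`0–3`, `1–4`, `2–5`). -/
def triPendEdges : Finset (Sym2 (Fin 6)) :=
  {s(0,1), s(1,2), s(0,2), s(0,3), s(1,4), s(2,5)}

/-- The graph on six vertices: a triangle with a pendant vertex at each corner. -/
def triPendGraph : SimpleGraph (Fin 6) := SimpleGraph.fromEdgeSet ↑triPendEdges

/-- The three pendant edges. -/
def pendantEdges : Finset (Sym2 (Fin 6)) := {s(0,3), s(1,4), s(2,5)}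


set_option maxRecDepth 20000 in
lemma edgeSet_eq : triPendGraph.edgeSet = ↑triPendEdges := by
  rw [triPendGraph, SimpleGraph.edgeSet_fromEdgeSet]
  ext e
  simp only [Set.mem_diff, Set.mem_setOf_eq, Finset.mem_coe, and_iff_left_iff_imp]
  exact fun he => (by decide : ∀ e ∈ triPendEdges, ¬ e.IsDiag) e he

lemma isMatching_iff (M : Finset (Sym2 (Fin 6))) :
    IsMatching triPendGraph M ↔
      M ⊆ triPendEdges ∧ ∀ e ∈ M, ∀ f ∈ M, e ≠ f → ∀ v, v ∈ e → v ∉ f := by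
  unfold IsMatching
  rw [edgeSet_eq]
  constructor
  · rintro ⟨h1, h2⟩; exact ⟨fun e he => h1 e he, h2⟩
  · rintro ⟨h1, h2⟩; exact ⟨fun e he => h1 he, h2⟩

set_option maxRecDepth 100000 in
lemma keyA : ∀ M ∈ triPendEdges.powerset,
    (∀ e ∈ M, ∀ f ∈ M, e ≠ f → ∀ v, v ∈ e → v ∉ f) →
    (∀ e ∈ M, e ∈ pendantEdges) ∨ M.card ≤ 2 := by decide

set_option maxRecDepth 100000 in
lemma keyB : ∀ M ∈ triPendEdges.powerset,
    (∀ e ∈ M, ∀ f ∈ M, e ≠ f → ∀ v, v ∈ e → v ∉ f) →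
    (∀ e ∈ M, e ∉ pendantEdges) → M.card ≤ 1 := by decide

lemma pend_card : pendantEdges.card = 3 := rfl

lemma key3' : ∀ M, IsMatching triPendGraph M → Disjoint M pendantEdges → M.card ≤ 1 := by
  intro M hM hd
  rw [isMatching_iff] at hM
  exact keyB M (Finset.mem_powerset.mpr hM.1) hM.2 (Finset.disjoint_left.mp hd)

lemma key2' : ∀ M, IsMatching triPendGraph M → M.card ≤ 3 ∧ (M.card = 3 → M = pendantEdges) := by
  intro M hM
  rw [isMatching_iff] at hM
  rcases keyA M (Finset.mem_powerset.mpr hM.1) hM.2 with h | h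
  · have hsub : M ⊆ pendantEdges := h
    have hle : M.card ≤ 3 := pend_card ▸ Finset.card_le_card hsub
    exact ⟨hle, fun hc => Finset.eq_of_subset_of_card_le hsub (le_of_eq (pend_card.trans hc.symm))⟩
  · exact ⟨by omega, fun hc => by omega⟩


/-- In the triangle-with-pendants graph (unit weights), the optimal
3-disjoint matching has weight 6 (covering all edges), the unique maximum-weight
matching consists exactly of the three pendant edges, after removing them every
matching has size at most 1, and hence the iterative approach achieves at most 5 < 6. -/
theorem triPend_iterative_suboptimal :
    (∃ Ms : Fin 3 → Finset (Sym2 (Fin 6)), IsKDisjointMatching triPendGraph 3 Ms ∧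
      Finset.univ.biUnion Ms = triPendEdges ∧ ∑ i, (Ms i).card = 6) ∧
    (IsMatching triPendGraph pendantEdges ∧
      ∀ M, IsMatching triPendGraph M → M.card ≤ 3 ∧ (M.card = 3 → M = pendantEdges)) ∧
    (∀ M, IsMatching triPendGraph M → Disjoint M pendantEdges → M.card ≤ 1) ∧
    (∀ M2 M3 : Finset (Sym2 (Fin 6)),
      IsMatching triPendGraph M2 → IsMatching triPendGraph M3 →
      Disjoint M2 pendantEdges → Disjoint M3 pendantEdges → Disjoint M2 M3 →
      pendantEdges.card + M2.card + M3.card ≤ 5 ∧ pendantEdges.card + M2.card + M3.card < 6) := by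
  have hmatch := fun M => (isMatching_iff M)
  refine ⟨?_, ⟨?_, key2'⟩, key3', ?_⟩
  · refine ⟨![{s(0,1), s(2,5)}, {s(1,2), s(0,3)}, {s(0,2), s(1,4)}], ⟨?_, ?_⟩, ?_, ?_⟩
    · intro i
      rw [isMatching_iff]
      fin_cases i <;> exact ⟨by decide, by decide⟩
    · intro i j hij
      rw [Finset.disjoint_left]
      fin_cases i <;> fin_cases j <;> first | exact absurd rfl hij | decide
    · apply Finset.ext
      intro e
      simp only [Finset.mem_biUnion, Finset.mem_univ, true_and]
      constructor
      · rintro ⟨i, hi⟩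
        fin_cases i <;>
          exact (by decide : ∀ x ∈ ({s(0,1), s(2,5), s(1,2), s(0,3), s(0,2), s(1,4)} :
            Finset (Sym2 (Fin 6))), x ∈ triPendEdges) e (by first | (simp_all; tauto) | simp_all)
      · intro he
        have : ∀ x ∈ triPendEdges, x ∈ ({s(0,1), s(2,5)} : Finset (Sym2 (Fin 6))) ∨
            x ∈ ({s(1,2), s(0,3)} : Finset (Sym2 (Fin 6))) ∨
            x ∈ ({s(0,2), s(1,4)} : Finset (Sym2 (Fin 6))) := by decide
        rcases this e he with h | h | h
        · exact ⟨0, h⟩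
        · exact ⟨1, h⟩
        · exact ⟨2, h⟩
    · rfl
  · rw [isMatching_iff]
    exact ⟨by decide, by decide⟩
  · intro M2 M3 h2 h3 hd2 hd3 _
    have c2 := key3' M2 h2 hd2
    have c3 := key3' M3 h3 hd3
    have := pend_card
    omega
end

section
/- If F is a subset of edges of a simple graph such that every vertex is incident to at most k − 1 edges of F (i.e., F is a (k−1)-matching), then F can be partitioned into k pairwise disjoint matchings. -/
/-!
The colour classes of a proper edge colouring with `k` colours are `k` disjoint matchings, so it
suffices to prove Vizing's theorem: a simple graph of maximum degree `Δ` has a proper edge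
colouring with `Δ + 1` colours. Add the edges one at a time. To colour `uv`, grow a fan
`v = v₀, v₁, …` of neighbours of `u` in which the colour of `uvᵢ₊₁` is missing at `vᵢ`; shifting
every colour one step down the fan moves the uncoloured edge to any `uvᵢ`. Let `α` be missing at
`u` and `β` at the last vertex `w`. If `β` is missing at `u`, shift to `w` and use `β`. If `β` is
the colour of an edge `uvᵢ` back into the fan, then `u`, `vᵢ₋₁` and `w` each miss `α` or `β`; as
the `α/β`-subgraph has maximum degree two, one of `vᵢ₋₁`, `w` lies outside the `α/β`-component of
`u`. Interchanging `α` and `β` on its component makes `α` missing there, and shifting to that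
vertex lets `α` colour the uncoloured edge. Otherwise `β` extends the fan by a new neighbour.
-/

open Finset

variable {V : Type*}

theorem SimpleGraph.Connected.card_filter_degree_le_one_le_two {W : Type*} [Fintype W]
    {G : SimpleGraph W} [DecidableRel G.Adj] (hG : G.Connected) (h : ∀ v, G.degree v ≤ 2) :
    #{v | G.degree v ≤ 1} ≤ 2 := by
  have hconn : Fintype.card W ≤ #G.edgeFinset + 1 := by
    have := hG.card_vert_le_card_edgeSet_add_one
    rwa [Nat.card_eq_fintype_card, Nat.card_eq_fintype_card, ← SimpleGraph.edgeFinset_card] at this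
  have hsum : ∑ v, G.degree v + #{v | G.degree v ≤ 1} ≤ 2 * Fintype.card W := by
    rw [card_filter, ← sum_add_distrib]
    calc _ ≤ ∑ _v : W, 2 := sum_le_sum fun v _ => by have := h v; split_ifs <;> omega
      _ = 2 * Fintype.card W := by simp [mul_comm]
  rw [G.sum_degrees_eq_twice_card_edges] at hsum
  omega

section Coloring

variable {k : ℕ}

def MissingAt (c : Sym2 V → Fin k) (S : Finset (Sym2 V)) (v : V) (a : Fin k) : Prop :=
  ∀ f ∈ S, v ∈ f → c f ≠ a

variable {c : Sym2 V → Fin k} {S S' : Finset (Sym2 V)}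

theorem exists_missingAt [DecidableEq V] {v : V} (h : #{f ∈ S | v ∈ f} < k) :
    ∃ a, MissingAt c S v a := by
  obtain ⟨a, -, ha⟩ := exists_mem_notMem_of_card_lt_card
    (s := image c {f ∈ S | v ∈ f}) (t := univ) (by simpa using card_image_le.trans_lt h)
  exact ⟨a, fun f hf hv hfa => ha (mem_image.2 ⟨f, mem_filter.2 ⟨hf, hv⟩, hfa⟩)⟩

theorem MissingAt.mono {v : V} {a : Fin k} (h : MissingAt c S v a) (hS : S' ⊆ S) :
    MissingAt c S' v a :=
  fun f hf => h f (hS hf)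

theorem MissingAt.update [DecidableEq V] {v : V} {a γ : Fin k} {e : Sym2 V}
    (h : MissingAt c S v a) (hS : S' ⊆ insert e S) (hγ : v ∈ e → γ ≠ a) :
    MissingAt (Function.update c e γ) S' v a := by
  intro f hf hv
  rcases eq_or_ne f e with rfl | hfe
  · simpa using hγ hv
  · rw [Function.update_of_ne hfe]
    exact h f ((mem_insert.1 (hS hf)).resolve_left hfe) hv

theorem ProperColoringOn.mono (hc : ProperColoringOn k S c) (hS : S' ⊆ S) :
    ProperColoringOn k S' c :=
  fun e he f hf => hc e (hS he) f (hS hf)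

theorem ProperColoringOn.eq_of_mem {e f : Sym2 V} {v : V} (hc : ProperColoringOn k S c)
    (he : e ∈ S) (hf : f ∈ S) (hve : v ∈ e) (hvf : v ∈ f) (h : c e = c f) : e = f := by
  by_contra hne
  exact hc e he f hf hne ⟨v, hve, hvf⟩ h

theorem ProperColoringOn.update [DecidableEq V] {F : Finset (Sym2 V)} {e : Sym2 V} {a : Fin k}
    (hc : ProperColoringOn k (F.erase e) c) (ha : ∀ x ∈ e, MissingAt c (F.erase e) x a) :
    ProperColoringOn k F (Function.update c e a) := by
  have key : ∀ f ∈ F, f ≠ e → ∀ x ∈ e, x ∈ f → Function.update c e a f ≠ a := by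
    intro f hf hfe x hxe hxf
    rw [Function.update_of_ne hfe]
    exact ha x hxe f (mem_erase.2 ⟨hfe, hf⟩) hxf
  rintro f hf g hg hfg ⟨x, hxf, hxg⟩
  rcases eq_or_ne f e with rfl | hfe
  · simpa using (key g hg (Ne.symm hfg) x hxf hxg).symm
  rcases eq_or_ne g e with rfl | hge
  · simpa using key f hf hfe x hxg hxf
  rw [Function.update_of_ne hfe, Function.update_of_ne hge]
  exact hc f (mem_erase.2 ⟨hfe, hf⟩) g (mem_erase.2 ⟨hge, hg⟩) hfg ⟨x, hxf, hxg⟩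

theorem ProperColoringOn.shift [DecidableEq V] {F : Finset (Sym2 V)} {u v v' : V}
    (hc : ProperColoringOn k (F.erase s(u, v)) c) (hv' : s(u, v') ∈ F.erase s(u, v))
    (hv : MissingAt c (F.erase s(u, v)) v (c s(u, v'))) :
    ProperColoringOn k (F.erase s(u, v')) (Function.update c s(u, v) (c s(u, v'))) := by
  have hsub : (F.erase s(u, v')).erase s(u, v) ⊆ F.erase s(u, v) := by
    rw [erase_right_comm]; exact erase_subset _ _
  refine (hc.mono hsub).update fun x hx => ?_
  rcases Sym2.mem_iff.1 hx with rfl | rfl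
  · intro f hf hxf hcf
    have hf' := mem_erase.1 (mem_erase.1 hf).2
    exact hf'.1 (hc.eq_of_mem (hsub hf) hv' hxf (Sym2.mem_mk_left _ _) hcf)
  · exact hv.mono hsub

end Coloring

section Kempe

variable {k : ℕ} {c : Sym2 V → Fin k} {S : Finset (Sym2 V)} {α β : Fin k} {u : V}

def kempeGraph (c : Sym2 V → Fin k) (S : Finset (Sym2 V)) (α β : Fin k) : SimpleGraph V :=
  SimpleGraph.fromEdgeSet {f | f ∈ S ∧ (c f = α ∨ c f = β)}

theorem kempeGraph_adj {x y : V} : (kempeGraph c S α β).Adj x y ↔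
    (s(x, y) ∈ S ∧ (c s(x, y) = α ∨ c s(x, y) = β)) ∧ x ≠ y :=
  SimpleGraph.fromEdgeSet_adj _

open Classical in
noncomputable def kempeSwap (C : (kempeGraph c S α β).ConnectedComponent) (f : Sym2 V) : Fin k :=
  if ∃ x ∈ f, x ∈ C then Equiv.swap α β (c f) else c f

theorem mem_kempeComponent_of_mem {C : (kempeGraph c S α β).ConnectedComponent} {f : Sym2 V}
    {x y : V} (hf : f ∈ S) (hcf : c f = α ∨ c f = β) (hx : x ∈ f) (hy : y ∈ f) (hxC : x ∈ C) :
    y ∈ C := by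
  rcases eq_or_ne x y with rfl | hxy
  · exact hxC
  refine C.mem_supp_of_adj_mem_supp hxC (kempeGraph_adj.2 ⟨?_, hxy⟩)
  rw [Sym2.eq_of_ne_mem hxy (Sym2.mem_mk_left x y) (Sym2.mem_mk_right x y) hx hy]
  exact ⟨hf, hcf⟩

variable {C : (kempeGraph c S α β).ConnectedComponent} {f : Sym2 V} {z : V}

theorem kempeSwap_of_mem (hz : z ∈ f) (hzC : z ∈ C) :
    kempeSwap C f = Equiv.swap α β (c f) :=
  if_pos ⟨z, hz, hzC⟩

theorem kempeSwap_of_notMem (hf : f ∈ S) (hz : z ∈ f) (hzC : z ∉ C) : kempeSwap C f = c f := by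
  unfold kempeSwap
  split_ifs with h
  · obtain ⟨x, hx, hxC⟩ := h
    by_cases hcf : c f = α ∨ c f = β
    · exact absurd (mem_kempeComponent_of_mem hf hcf hx hz hxC) hzC
    · exact Equiv.swap_apply_of_ne_of_ne (not_or.1 hcf).1 (not_or.1 hcf).2
  · rfl

theorem ProperColoringOn.kempeSwap (hc : ProperColoringOn k S c) :
    ProperColoringOn k S (kempeSwap C) := by
  rintro e he f hf hef ⟨x, hxe, hxf⟩
  by_cases hxC : x ∈ C
  · rw [kempeSwap_of_mem hxe hxC, kempeSwap_of_mem hxf hxC, (Equiv.swap α β).injective.ne_iff]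
    exact hc e he f hf hef ⟨x, hxe, hxf⟩
  · rw [kempeSwap_of_notMem he hxe hxC, kempeSwap_of_notMem hf hxf hxC]
    exact hc e he f hf hef ⟨x, hxe, hxf⟩

theorem MissingAt.kempeSwap_of_notMem {a : Fin k} (h : MissingAt c S z a) (hzC : z ∉ C) :
    MissingAt (kempeSwap C) S z a := by
  intro f hf hz
  rw [_root_.kempeSwap_of_notMem hf hz hzC]
  exact h f hf hz

theorem MissingAt.kempeSwap_of_mem (h : MissingAt c S z β) (hzC : z ∈ C) :
    MissingAt (kempeSwap C) S z α := by
  intro f hf hz hfα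
  rw [_root_.kempeSwap_of_mem hz hzC, Equiv.swap_apply_eq_iff, Equiv.swap_apply_left] at hfα
  exact h f hf hz hfα

theorem MissingAt.kempeSwap_of_ne {a : Fin k} (h : MissingAt c S z a) (haα : a ≠ α) (haβ : a ≠ β) :
    MissingAt (kempeSwap C) S z a := by
  intro f hf hz hfa
  unfold _root_.kempeSwap at hfa
  split_ifs at hfa
  · rw [Equiv.swap_apply_eq_iff, Equiv.swap_apply_of_ne_of_ne haα haβ] at hfa
    exact h f hf hz hfa
  · exact h f hf hz hfa

theorem List.IsChain.kempeSwap (hu : u ∉ C) {l : List V}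
    (hl : ∀ b ∈ l.tail, s(u, b) ∈ S ∧ c s(u, b) ≠ α ∧ c s(u, b) ≠ β)
    (h : l.IsChain fun a b => MissingAt c S a (c s(u, b))) :
    l.IsChain fun a b => MissingAt (_root_.kempeSwap C) S a (_root_.kempeSwap C s(u, b)) :=
  h.imp_of_mem_tail_imp fun a b _ hb hab => by
    obtain ⟨hbS, hα, hβ⟩ := hl b hb
    rw [kempeSwap_of_notMem hbS (Sym2.mem_mk_left u b) hu]
    exact hab.kempeSwap_of_ne hα hβ

end Kempe

section Ends

variable [DecidableEq V] {k : ℕ} {c : Sym2 V → Fin k} {S : Finset (Sym2 V)} {α β : Fin k}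

theorem ProperColoringOn.card_filter_mem_le (hc : ProperColoringOn k S c) (x : V)
    (A : Finset (Fin k)) : #{f ∈ S | x ∈ f ∧ c f ∈ A} ≤ #A := by
  refine card_le_card_of_injOn c (fun f hf => (mem_filter.1 hf).2.2) fun f hf g hg hfg => ?_
  simp only [mem_coe, mem_filter] at hf hg
  exact hc.eq_of_mem hf.1 hg.1 hf.2.1 hg.2.1 hfg

theorem ProperColoringOn.card_kempe_le_two (hc : ProperColoringOn k S c) (x : V) :
    #{f ∈ S | x ∈ f ∧ (c f = α ∨ c f = β)} ≤ 2 := by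
  simpa only [mem_insert, mem_singleton] using
    (hc.card_filter_mem_le x {α, β}).trans card_le_two

theorem ProperColoringOn.card_kempe_le_one (hc : ProperColoringOn k S c) {x : V}
    (hx : MissingAt c S x α ∨ MissingAt c S x β) :
    #{f ∈ S | x ∈ f ∧ (c f = α ∨ c f = β)} ≤ 1 := by
  obtain ⟨γ, hγ⟩ : ∃ γ, ∀ f ∈ S, x ∈ f → (c f = α ∨ c f = β) → c f = γ := by
    rcases hx with hx | hx
    exacts [⟨β, fun f hf hxf h => h.resolve_left (hx f hf hxf)⟩,
      ⟨α, fun f hf hxf h => h.resolve_right (hx f hf hxf)⟩]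
  refine (card_le_card fun f hf => ?_).trans
    ((hc.card_filter_mem_le x {γ}).trans_eq (card_singleton γ))
  simp only [mem_filter, mem_singleton] at hf ⊢
  exact ⟨hf.1, hf.2.1, hγ f hf.1 hf.2.1 hf.2.2⟩

theorem kempeComponent_finite (C : (kempeGraph c S α β).ConnectedComponent) :
    C.supp.Finite := by
  refine C.ind fun x₀ => ?_
  refine ((S.biUnion Sym2.toFinset).finite_toSet.insert x₀).subset fun x hx => ?_
  rcases eq_or_ne x x₀ with rfl | hne
  · exact Set.mem_insert _ _
  obtain ⟨y, hxy⟩ := (SimpleGraph.mem_support _).1 <|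
    SimpleGraph.mem_support_of_reachable hne (SimpleGraph.ConnectedComponent.exact hx)
  rw [kempeGraph_adj] at hxy
  exact Set.mem_insert_of_mem _
    (mem_biUnion.2 ⟨_, hxy.1.1, Sym2.mem_toFinset.2 (Sym2.mem_mk_left x y)⟩)

theorem kempeComponent_degree_le (C : (kempeGraph c S α β).ConnectedComponent) (x : C)
    [Fintype (C.toSimpleGraph.neighborSet x)] :
    C.toSimpleGraph.degree x ≤ #{f ∈ S | x.1 ∈ f ∧ (c f = α ∨ c f = β)} := by
  rw [← SimpleGraph.card_neighborFinset_eq_degree]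
  refine card_le_card_of_injOn (fun y => s(x.1, y.1)) (fun y hy => ?_) fun y _ y' _ h =>
    Subtype.ext (Sym2.congr_right.1 h)
  have hadj : (kempeGraph c S α β).Adj x y :=
    (C.toSimpleGraph.mem_neighborFinset x y).1 (mem_coe.1 hy)
  rw [kempeGraph_adj] at hadj
  exact mem_filter.2 ⟨hadj.1.1, Sym2.mem_mk_left _ _, hadj.1.2⟩

/-- An `α/β`-component is a path or a cycle, so at most two of its vertices miss `α` or `β`. -/
theorem ProperColoringOn.notMem_kempeComponent (hc : ProperColoringOn k S c)
    {C : (kempeGraph c S α β).ConnectedComponent} {x y z : V}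
    (hxy : x ≠ y) (hxz : x ≠ z) (hyz : y ≠ z) (hx : x ∈ C) (hy : y ∈ C)
    (hmx : MissingAt c S x α ∨ MissingAt c S x β) (hmy : MissingAt c S y α ∨ MissingAt c S y β)
    (hmz : MissingAt c S z α ∨ MissingAt c S z β) : z ∉ C := by
  intro hz
  classical
  have := (kempeComponent_finite C).to_subtype
  have := Fintype.ofFinite C
  have hends := C.connected_toSimpleGraph.card_filter_degree_le_one_le_two
    fun v => (kempeComponent_degree_le C v).trans (hc.card_kempe_le_two v)
  have hlow : ∀ (v : C), (MissingAt c S v α ∨ MissingAt c S v β) →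
      v ∈ ({v | C.toSimpleGraph.degree v ≤ 1} : Finset C) := fun v hv =>
    mem_filter.2 ⟨mem_univ _, (kempeComponent_degree_le C v).trans (hc.card_kempe_le_one hv)⟩
  have : #({⟨x, hx⟩, ⟨y, hy⟩, ⟨z, hz⟩} : Finset C) ≤ 2 := by
    refine (card_le_card ?_).trans hends
    simp only [insert_subset_iff, singleton_subset_iff]
    exact ⟨hlow _ hmx, hlow _ hmy, hlow _ hmz⟩
  rw [card_insert_of_notMem (by simp [hxy, hxz]), card_pair (by simp [hyz])] at this
  omega

end Ends

section Fan

variable [DecidableEq V] {k : ℕ} {F : Finset (Sym2 V)} {c : Sym2 V → Fin k} {u v : V}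

/-- A fan at `u` whose first edge `s(u, v)` is the uncoloured one: `c` is meant to be proper on
`F.erase s(u, v)`, and its value on `s(u, v)` is never read. -/
structure IsFan (F : Finset (Sym2 V)) (c : Sym2 V → Fin k) (u v : V) (T : List V) : Prop where
  nodup : (v :: T).Nodup
  mem : ∀ z ∈ v :: T, s(u, z) ∈ F
  isChain : (v :: T).IsChain fun a b => MissingAt c (F.erase s(u, v)) a (c s(u, b))

theorem IsFan.mem_erase {T : List V} {b : V} (hfan : IsFan F c u v T) (hb : b ∈ T) :
    s(u, b) ∈ F.erase s(u, v) :=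
  Finset.mem_erase.2 ⟨fun h => (List.nodup_cons.1 hfan.nodup).1 (Sym2.congr_right.1 h ▸ hb),
    hfan.mem b (List.mem_cons_of_mem _ hb)⟩

theorem IsFan.append_left {P Q : List V} (hfan : IsFan F c u v (P ++ Q)) : IsFan F c u v P where
  nodup := (List.nodup_append.1 (List.cons_append ▸ hfan.nodup)).1
  mem z hz := hfan.mem z (List.cons_append ▸ List.mem_append_left _ hz)
  isChain := (List.cons_append ▸ hfan.isChain).left_of_append

theorem IsFan.length_le {T : List V} (hfan : IsFan F c u v T) :
    (v :: T).length ≤ #{f ∈ F | u ∈ f} := by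
  rw [← List.toFinset_card_of_nodup hfan.nodup]
  refine card_le_card_of_injOn (fun z => s(u, z)) (fun z hz => ?_)
    fun z _ z' _ h => Sym2.congr_right.1 h
  exact mem_filter.2 ⟨hfan.mem z (List.mem_toFinset.1 hz), Sym2.mem_mk_left _ _⟩

theorem IsFan.concat {T : List V} {x : V} (hfan : IsFan F c u v T) (hx : x ∉ v :: T)
    (hxF : s(u, x) ∈ F)
    (hw : MissingAt c (F.erase s(u, v)) ((v :: T).getLast (List.cons_ne_nil v T)) (c s(u, x))) :
    IsFan F c u v (T ++ [x]) where
  nodup := by simpa using hfan.nodup.concat hx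
  mem z hz := by
    rw [← List.cons_append, List.mem_append, List.mem_singleton] at hz
    exact hz.elim (hfan.mem z) fun h => h ▸ hxF
  isChain := by
    rw [← List.cons_append]
    refine hfan.isChain.append (List.isChain_singleton x) fun a ha b hb => ?_
    rw [List.getLast?_eq_some_getLast (List.cons_ne_nil v T), Option.mem_some_iff] at ha
    cases ha
    cases hb
    exact hw

theorem IsFan.exists_properColoringOn (hF : ∀ f ∈ F, ¬ f.IsDiag) {T : List V} {a : Fin k}
    (hfan : IsFan F c u v T) (hc : ProperColoringOn k (F.erase s(u, v)) c)
    (hu : MissingAt c (F.erase s(u, v)) u a)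
    (hw : MissingAt c (F.erase s(u, v)) ((v :: T).getLast (List.cons_ne_nil v T)) a) :
    ∃ c' : Sym2 V → Fin k, ProperColoringOn k F c' := by
  induction T generalizing v c with
  | nil =>
    refine ⟨Function.update c s(u, v) a, hc.update fun x hx => ?_⟩
    rcases Sym2.mem_iff.1 hx with rfl | rfl
    exacts [hu, hw]
  | cons v' T ih =>
    have hvF := hfan.mem v List.mem_cons_self
    have hv : v ∉ v' :: T := (List.nodup_cons.1 hfan.nodup).1
    have hne : ∀ z ∈ v' :: T, z ∉ s(u, v) := by
      intro z hz hzuv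
      rcases Sym2.mem_iff.1 hzuv with rfl | rfl
      · exact hF _ (hfan.mem z (List.mem_cons_of_mem _ hz)) (Sym2.mk_isDiag_iff.2 rfl)
      · exact hv hz
    have hv' : s(u, v') ∈ F.erase s(u, v) := hfan.mem_erase List.mem_cons_self
    have hsub : F.erase s(u, v') ⊆ insert s(u, v) (F.erase s(u, v)) :=
      (erase_subset _ _).trans (insert_erase hvF).superset
    have hfan' : IsFan F (Function.update c s(u, v) (c s(u, v'))) u v' T :=
      { nodup := (List.nodup_cons.1 hfan.nodup).2
        mem := fun z hz => hfan.mem z (List.mem_cons_of_mem _ hz)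
        isChain := (List.isChain_cons_cons.1 hfan.isChain).2.imp_of_mem_tail_imp
          fun a b ha hb hab => by
            rw [Function.update_of_ne fun h => hv <| by
              rw [← Sym2.congr_right.1 h]; exact List.mem_cons_of_mem _ hb]
            exact hab.update hsub fun h => absurd h (hne a ha) }
    rw [List.getLast_cons (List.cons_ne_nil v' T)] at hw
    exact ih hfan' (hc.shift hv' (List.isChain_cons_cons.1 hfan.isChain).1)
      (hu.update hsub fun _ => hu _ hv' (Sym2.mem_mk_left _ _))
      (hw.update hsub fun h => absurd h (hne _ (List.getLast_mem _)))

theorem IsFan.color_ne {T : List V} {α β : Fin k} {x b : V} (hfan : IsFan F c u v T)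
    (hc : ProperColoringOn k (F.erase s(u, v)) c) (hα : MissingAt c (F.erase s(u, v)) u α)
    (hx : x ∈ T) (hcx : c s(u, x) = β) (hb : b ∈ T) (hbx : b ≠ x) :
    c s(u, b) ≠ α ∧ c s(u, b) ≠ β :=
  ⟨hα _ (hfan.mem_erase hb) (Sym2.mem_mk_left _ _), fun h => hbx <| Sym2.congr_right.1 <|
    hc.eq_of_mem (hfan.mem_erase hb) (hfan.mem_erase hx) (Sym2.mem_mk_left _ _)
      (Sym2.mem_mk_left _ _) (h.trans hcx.symm)⟩

variable {α β : Fin k} {C : (kempeGraph c (F.erase s(u, v)) α β).ConnectedComponent}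

theorem IsFan.kempeSwap {T : List V} (hfan : IsFan F c u v T) (huC : u ∉ C)
    (hT : ∀ b ∈ T, c s(u, b) ≠ α ∧ c s(u, b) ≠ β) : IsFan F (_root_.kempeSwap C) u v T :=
  ⟨hfan.nodup, hfan.mem, hfan.isChain.kempeSwap huC fun b hb => ⟨hfan.mem_erase hb, hT b hb⟩⟩

/-- The link from the last vertex of `v :: P` to `x` survives the swap because that vertex is
outside `C`, whatever the colour of `s(u, x)`. -/
theorem IsFan.kempeSwap_append {P Q : List V} {x : V} (hfan : IsFan F c u v (P ++ x :: Q))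
    (huC : u ∉ C) (hyC : (v :: P).getLast (List.cons_ne_nil v P) ∉ C)
    (hT : ∀ b ∈ P ++ x :: Q, b ≠ x → c s(u, b) ≠ α ∧ c s(u, b) ≠ β) :
    IsFan F (_root_.kempeSwap C) u v (P ++ x :: Q) := by
  have hx : x ∉ v :: P ++ Q :=
    (List.nodup_cons.1 (List.nodup_middle.1 (List.cons_append ▸ hfan.nodup))).1
  have hch : (v :: P ++ x :: Q).IsChain fun a b => MissingAt c (F.erase s(u, v)) a (c s(u, b)) :=
    hfan.isChain
  refine ⟨hfan.nodup, hfan.mem, ?_⟩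
  obtain ⟨-, hchQ, hlink⟩ := List.isChain_append.1 hch
  have hP : IsFan F (_root_.kempeSwap C) u v P :=
    hfan.append_left.kempeSwap huC fun b hb => hT b (List.mem_append_left _ hb)
      fun h => hx (h ▸ List.mem_append_left _ (List.mem_cons_of_mem _ hb))
  have hQ : ∀ b ∈ (x :: Q).tail, s(u, b) ∈ F.erase s(u, v) ∧ c s(u, b) ≠ α ∧ c s(u, b) ≠ β :=
    fun b hb => have hb' := List.mem_append_right P (List.mem_cons_of_mem x hb)
      ⟨hfan.mem_erase hb', hT b hb' fun h => hx (h ▸ List.mem_append_right _ hb)⟩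
  rw [← List.cons_append]
  refine hP.isChain.append (hchQ.kempeSwap huC hQ) fun a ha b hb => ?_
  rw [List.getLast?_eq_some_getLast (List.cons_ne_nil v P), Option.mem_some_iff] at ha
  obtain rfl : x = b := Option.mem_some_iff.1 hb
  subst ha
  rw [kempeSwap_of_notMem (hfan.mem_erase (List.mem_append_right _ List.mem_cons_self))
    (Sym2.mem_mk_left u x) huC]
  exact (hlink _ (List.getLast?_eq_some_getLast _) x rfl).kempeSwap_of_notMem hyC

end Fan

section Vizing

variable [DecidableEq V] {k : ℕ} {F : Finset (Sym2 V)} {c : Sym2 V → Fin k} {u v : V}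

theorem IsFan.exists_properColoringOn_of_mem (hF : ∀ f ∈ F, ¬ f.IsDiag) {T : List V}
    (hfan : IsFan F c u v T) (hc : ProperColoringOn k (F.erase s(u, v)) c) {α β : Fin k}
    (hα : MissingAt c (F.erase s(u, v)) u α)
    (hβ : MissingAt c (F.erase s(u, v)) ((v :: T).getLast (List.cons_ne_nil v T)) β)
    {x : V} (hx : x ∈ T) (hcx : c s(u, x) = β) :
    ∃ c' : Sym2 V → Fin k, ProperColoringOn k F c' := by
  obtain ⟨P, Q, rfl⟩ := List.append_of_mem hx
  set y := (v :: P).getLast (List.cons_ne_nil v P)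
  set w := (v :: (P ++ x :: Q)).getLast (List.cons_ne_nil _ _)
  have hy : MissingAt c (F.erase s(u, v)) y β := hcx ▸ List.IsChain.rel_getLast_head_of_append
    (List.cons_append ▸ hfan.isChain) (List.cons_ne_nil v P) (List.cons_ne_nil x Q)
  have hyw : y ≠ w := by
    refine (List.nodup_append.1 (List.cons_append ▸ hfan.nodup)).2.2 y (List.getLast_mem _) w ?_
    simp only [w, ← List.cons_append, List.getLast_append_of_ne_nil _ (List.cons_ne_nil x Q)]
    exact List.getLast_mem _
  have hu : ∀ z ∈ v :: (P ++ x :: Q), u ≠ z := fun z hz h =>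
    hF _ (hfan.mem z hz) (Sym2.mk_isDiag_iff.2 h)
  have hT : ∀ b ∈ P ++ x :: Q, b ≠ x → c s(u, b) ≠ α ∧ c s(u, b) ≠ β :=
    fun b hb => hfan.color_ne hc hα hx hcx hb
  have hxP : x ∉ v :: P ++ Q :=
    (List.nodup_cons.1 (List.nodup_middle.1 (List.cons_append ▸ hfan.nodup))).1
  set G := kempeGraph c (F.erase s(u, v)) α β
  by_cases hyu : y ∈ G.connectedComponentMk u
  · -- The `α/β`-component of `u` reaches `y`, hence not `w`: swap the one of `w`.
    have hwu : w ∉ G.connectedComponentMk u :=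
      hc.notMem_kempeComponent
        (hu y (List.cons_append ▸ List.mem_append_left _ (List.getLast_mem _)))
        (hu w (List.getLast_mem _)) hyw rfl hyu (.inl hα) (.inr hy) (.inr hβ)
    have huC : u ∉ G.connectedComponentMk w := fun h => hwu h.symm
    exact (hfan.kempeSwap_append huC (fun h => hwu (h.symm.trans hyu)) hT).exists_properColoringOn
      hF hc.kempeSwap (hα.kempeSwap_of_notMem huC) (hβ.kempeSwap_of_mem rfl)
  · -- Otherwise swap the `α/β`-component of `y` and stop the fan at `y`.
    have huC : u ∉ G.connectedComponentMk y := fun h => hyu h.symm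
    have hfanP : IsFan F (_root_.kempeSwap (G.connectedComponentMk y)) u v P :=
      hfan.append_left.kempeSwap huC fun b hb => hT b (List.mem_append_left _ hb)
        fun h => hxP (h ▸ List.mem_append_left _ (List.mem_cons_of_mem _ hb))
    exact hfanP.exists_properColoringOn hF hc.kempeSwap (hα.kempeSwap_of_notMem huC)
      (hy.kempeSwap_of_mem rfl)

theorem IsFan.exists_properColoringOn_of_card_lt (hF : ∀ f ∈ F, ¬ f.IsDiag)
    (hdeg : ∀ z, #{f ∈ F | z ∈ f} < k) (hc : ProperColoringOn k (F.erase s(u, v)) c)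
    {T : List V} (hfan : IsFan F c u v T) : ∃ c' : Sym2 V → Fin k, ProperColoringOn k F c' := by
  have hmiss (z : V) : ∃ a, MissingAt c (F.erase s(u, v)) z a :=
    exists_missingAt <| (card_le_card (filter_subset_filter _ (erase_subset _ _))).trans_lt (hdeg z)
  obtain ⟨α, hα⟩ := hmiss u
  obtain ⟨β, hβ⟩ := hmiss ((v :: T).getLast (List.cons_ne_nil v T))
  by_cases hβu : MissingAt c (F.erase s(u, v)) u β
  · exact hfan.exists_properColoringOn hF hc hβu hβ
  obtain ⟨g, hg, hug, hcg⟩ : ∃ g ∈ F.erase s(u, v), u ∈ g ∧ c g = β := by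
    simpa [MissingAt, and_assoc] using hβu
  obtain ⟨x, rfl⟩ := Sym2.mem_iff_exists.1 hug
  by_cases hx : x ∈ v :: T
  · have hxv : x ≠ v := by
      rintro rfl
      exact (Finset.mem_erase.1 hg).1 rfl
    exact hfan.exists_properColoringOn_of_mem hF hc hα hβ
      ((List.mem_cons.1 hx).resolve_left hxv) hcg
  have hfan' := hfan.concat hx (mem_of_mem_erase hg) (hcg ▸ hβ)
  have := hfan'.length_le
  exact hfan'.exists_properColoringOn_of_card_lt hF hdeg hc
termination_by #{f ∈ F | u ∈ f} - T.length
decreasing_by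
  simp only [List.length_cons, List.length_append] at this ⊢
  omega

theorem exists_properColoringOn_of_forall_card_le {Δ : ℕ} (F : Finset (Sym2 V))
    (hF : ∀ f ∈ F, ¬ f.IsDiag) (hdeg : ∀ v, #{f ∈ F | v ∈ f} ≤ Δ) :
    ∃ c : Sym2 V → Fin (Δ + 1), ProperColoringOn (Δ + 1) F c := by
  induction F using Finset.induction_on with
  | empty => exact ⟨fun _ => 0, by simp [ProperColoringOn]⟩
  | insert e F he ih =>
    obtain ⟨c, hc⟩ := ih (fun f hf => hF f (mem_insert_of_mem hf))
      fun v => (card_le_card (filter_subset_filter _ (subset_insert e F))).trans (hdeg v)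
    obtain ⟨u, v, rfl⟩ : ∃ u v, e = s(u, v) := e.ind fun u v => ⟨u, v, rfl⟩
    exact IsFan.exists_properColoringOn_of_card_lt (T := []) hF
      (fun z => Nat.lt_succ_of_le (hdeg z)) (by rwa [erase_insert he])
      ⟨List.nodup_singleton v, by simp, List.isChain_singleton v⟩

end Vizing

theorem ProperColoringOn.isKDisjointMatching [DecidableEq V] {G : SimpleGraph V} {k : ℕ}
    {F : Finset (Sym2 V)} {c : Sym2 V → Fin k} (hFE : ∀ e ∈ F, e ∈ G.edgeSet)
    (hc : ProperColoringOn k F c) : IsKDisjointMatching G k fun i => {f ∈ F | c f = i} := by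
  refine ⟨fun i => ⟨fun e he => hFE e (mem_filter.1 he).1, ?_⟩, fun i j hij => ?_⟩
  · intro e he f hf hef x hxe hxf
    rw [mem_filter] at he hf
    exact hc e he.1 f hf.1 hef ⟨x, hxe, hxf⟩ (he.2.trans hf.2.symm)
  · exact disjoint_filter.2 fun f _ hi hj => hij (hi ▸ hj)

/-- If every vertex is incident to at most `k − 1` edges of `F`,
then `F` can be partitioned into `k` pairwise disjoint matchings. -/
theorem kSubOneMatching_partitions_into_k_matchings [DecidableEq V]
    (G : SimpleGraph V) (k : ℕ) (hk : 1 ≤ k)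
    (F : Finset (Sym2 V)) (hFE : ∀ e ∈ F, e ∈ G.edgeSet)
    (hdeg : ∀ v : V, (F.filter (fun e => v ∈ e)).card ≤ k - 1) :
    ∃ Ms : Fin k → Finset (Sym2 V),
      IsKDisjointMatching G k Ms ∧ Finset.univ.biUnion Ms = F := by
  obtain ⟨Δ, rfl⟩ := Nat.exists_eq_add_of_le' hk
  obtain ⟨c, hc⟩ := exists_properColoringOn_of_forall_card_le F
    (fun f hf => G.not_isDiag_of_mem_edgeSet (hFE f hf)) (by simpa using hdeg)
  exact ⟨_, hc.isKDisjointMatching hFE, biUnion_filter_eq_of_maps_to fun _ _ => mem_univ _⟩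
end

section
/- Let k ≥ 1 and let G be the k-dimensional hypercube graph Q_k with k additional degree-one vertices attached to each hypercube vertex, where each hypercube edge has weight w + ε and each pendant edge has weight w (for real numbers w > 0, ε > 0). Then the set of all 2^(k−1)·k hypercube edges can be partitioned into k disjoint matchings (giving a k-disjoint matching of weight 2^(k−1)·k·(w+ε)), while the set of all 2^k·k pendant edges forms a k-disjoint matching of weight 2^k·k·w. Hence the ratio of the former to the latter is (w+ε)/(2w), which tends to 1/2 as ε → 0. -/
open Finset

variable {V : Type*}

/-- Hypercube adjacency: two binary strings of length `k` differing in exactly one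
coordinate. -/
def cubeAdj (k : ℕ) (x y : Fin k → Bool) : Prop :=
  ∃ i, x i ≠ y i ∧ ∀ j, j ≠ i → x j = y j

/-- Vertices: hypercube vertices (`inl`) plus, for each hypercube vertex, `k` private
pendant vertices (`inr (v, i)`). -/
abbrev PendCubeV (k : ℕ) := (Fin k → Bool) ⊕ ((Fin k → Bool) × Fin k)

/-- Adjacency of the hypercube with `k` pendant vertices attached to each vertex. -/
def pendCubeAdj (k : ℕ) : PendCubeV k → PendCubeV k → Prop
  | Sum.inl x, Sum.inl y => cubeAdj k x y
  | Sum.inl x, Sum.inr p => x = p.1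
  | Sum.inr p, Sum.inl x => p.1 = x
  | Sum.inr _, Sum.inr _ => False

/-- The hypercube `Q_k` with `k` pendant (degree-one) vertices attached to each
hypercube vertex. -/
def pendCubeGraph (k : ℕ) : SimpleGraph (PendCubeV k) where
  Adj := pendCubeAdj k
  symm := by
    constructor
    rintro (x | p) (y | q) h
    · obtain ⟨i, h1, h2⟩ := h
      exact ⟨i, Ne.symm h1, fun j hj => (h2 j hj).symm⟩
    · exact h.symm
    · exact h.symm
    · exact h
  loopless := by
    constructor
    rintro (x | p) h
    · obtain ⟨i, h1, _⟩ := h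
      exact h1 rfl
    · exact h

instance (k : ℕ) : DecidableRel (pendCubeGraph k).Adj := fun u v =>
  match u, v with
  | Sum.inl x, Sum.inl y =>
      decidable_of_iff (∃ i, x i ≠ y i ∧ ∀ j, j ≠ i → x j = y j) Iff.rfl
  | Sum.inl x, Sum.inr p => decidable_of_iff (x = p.1) Iff.rfl
  | Sum.inr p, Sum.inl x => decidable_of_iff (p.1 = x) Iff.rfl
  | Sum.inr _, Sum.inr _ => decidable_of_iff False Iff.rfl

/-- Weights: each hypercube edge gets weight `w + ε`, each pendant edge weight `w`. -/
def pendCubeWeight (k : ℕ) (w ε : ℝ) : Sym2 (PendCubeV k) → ℝ :=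
  Sym2.lift ⟨fun u v =>
    match u, v with
    | Sum.inl _, Sum.inl _ => w + ε
    | Sum.inr _, Sum.inr _ => 0
    | _, _ => w,
    by rintro (x | p) (y | q) <;> rfl⟩

/-- Whether both endpoints of an edge are hypercube vertices. -/
def isCubeEdge (k : ℕ) : Sym2 (PendCubeV k) → Bool :=
  Sym2.lift ⟨fun u v => u.isLeft && v.isLeft, by intro a b; exact Bool.and_comm _ _⟩

/-- Whether an edge is a pendant edge (exactly one endpoint is a pendant vertex). -/
def isPendantEdge (k : ℕ) : Sym2 (PendCubeV k) → Bool :=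
  Sym2.lift ⟨fun u v => xor u.isLeft v.isLeft, by intro a b; exact Bool.xor_comm _ _⟩

/-- The real-valued total weight of a set of edges. -/
def rweight {α : Type*} (f : Sym2 α → ℝ) (M : Finset (Sym2 α)) : ℝ := ∑ e ∈ M, f e

/-!
The hypercube edges in direction `i` form a matching with `2^(k-1)` edges, one for each vertex
with `i`-th bit `false`, and the pendant edges with index `i` form a matching with `2^k` edges,
one at each hypercube vertex. Both families of `k` matchings are pairwise disjoint and cover
the hypercube edges, respectively the pendant edges, so all counts and weights are read off
the sizes of the individual matchings.
-/

open Function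

section Matchings

variable {α V : Type*}

lemma injOn_sym2_mk {s : Set α} {f g : α → V} (hf : Set.InjOn f s)
    (hfg : ∀ a ∈ s, ∀ b ∈ s, f a ≠ g b) : Set.InjOn (fun x => s(f x, g x)) s := by
  intro a ha b hb h
  rcases Sym2.eq_iff.mp h with ⟨h, -⟩ | ⟨h, -⟩
  · exact hf ha hb h
  · exact absurd h (hfg a ha b hb)

lemma isMatching_image_sym2_mk [DecidableEq V] {G : SimpleGraph V} {s : Finset α}
    {f g : α → V} (hadj : ∀ a ∈ s, G.Adj (f a) (g a)) (hf : Set.InjOn f s)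
    (hg : Set.InjOn g s) (hfg : ∀ a ∈ s, ∀ b ∈ s, f a ≠ g b) :
    IsMatching G (s.image fun x => s(f x, g x)) := by
  simp only [IsMatching, mem_image, forall_exists_index, and_imp]
  refine ⟨fun _ a ha he => he ▸ hadj a ha, ?_⟩
  rintro _ a ha rfl _ b hb rfl hne v hva hvb
  apply hne
  rw [Sym2.mem_iff] at hva hvb
  rcases hva with rfl | rfl <;> rcases hvb with h | h
  · rw [hf ha hb h]
  · exact absurd h (hfg a ha b hb)
  · exact absurd h.symm (hfg b hb a ha)
  · rw [hg ha hb h]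

lemma IsKDisjointMatching.card_biUnion {G : SimpleGraph V} [DecidableEq V] {k : ℕ}
    {Ms : Fin k → Finset (Sym2 V)} (h : IsKDisjointMatching G k Ms) :
    #(univ.biUnion Ms) = ∑ i, #(Ms i) :=
  Finset.card_biUnion fun _ _ _ _ hij => h.2 hij

lemma rweight_eq_card_mul {f : Sym2 α → ℝ} {M : Finset (Sym2 α)} {c : ℝ}
    (h : ∀ e ∈ M, f e = c) : rweight f M = #M * c := by
  rw [rweight, sum_congr rfl h, sum_const, nsmul_eq_mul]

end Matchings

section PendCube

variable {k : ℕ}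

lemma card_filter_apply_eq_false (i : Fin k) :
    #{x : Fin k → Bool | x i = false} = 2 ^ (k - 1) := by
  have h := Fintype.card_filter_piFinset_const (univ : Finset Bool) i false
  rw [Fintype.piFinset_univ] at h
  simpa using h

lemma injOn_update_true (i : Fin k) :
    Set.InjOn (update · i true) {x : Fin k → Bool | x i = false} := by
  intro x hx y hy h
  calc x = update (update x i true) i false := by rw [update_idem, update_eq_self_iff.mpr hx.symm]
    _ = update (update y i true) i false := congrArg (update · i false) h
    _ = y := by rw [update_idem, update_eq_self_iff.mpr hy.symm]

def cubeMatching (k : ℕ) (i : Fin k) : Finset (Sym2 (PendCubeV k)) :=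
  ({x | x i = false} : Finset (Fin k → Bool)).image
    fun x => s(Sum.inl x, Sum.inl (update x i true))

def pendantMatching (k : ℕ) (i : Fin k) : Finset (Sym2 (PendCubeV k)) :=
  univ.image fun x : Fin k → Bool => s(Sum.inl x, Sum.inr (x, i))

lemma inl_ne_inl_update {i : Fin k} {x y : Fin k → Bool} (hx : x i = false) :
    (Sum.inl x : PendCubeV k) ≠ Sum.inl (update y i true) := by
  intro h
  simpa [hx] using congrFun (Sum.inl_injective h) i

lemma isMatching_cubeMatching (i : Fin k) :
    IsMatching (pendCubeGraph k) (cubeMatching k i) := by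
  refine isMatching_image_sym2_mk ?_ Sum.inl_injective.injOn
    (Sum.inl_injective.comp_injOn (by simpa using injOn_update_true i)) ?_
  · intro x hx
    exact ⟨i, by simp_all, fun j hj => (update_of_ne hj _ _).symm⟩
  · intro x hx y _
    exact inl_ne_inl_update (by simpa using hx)

lemma isMatching_pendantMatching (i : Fin k) :
    IsMatching (pendCubeGraph k) (pendantMatching k i) :=
  isMatching_image_sym2_mk (fun _ _ => rfl) Sum.inl_injective.injOn
    (fun _ _ _ _ h => congrArg Prod.fst (Sum.inr_injective h)) fun _ _ _ _ => Sum.inl_ne_inr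

lemma card_cubeMatching (i : Fin k) : #(cubeMatching k i) = 2 ^ (k - 1) := by
  rw [cubeMatching, card_image_of_injOn, card_filter_apply_eq_false]
  refine injOn_sym2_mk Sum.inl_injective.injOn fun x hx y _ => inl_ne_inl_update ?_
  simpa using hx

lemma card_pendantMatching (i : Fin k) : #(pendantMatching k i) = 2 ^ k := by
  rw [pendantMatching, card_image_of_injOn
    (injOn_sym2_mk Sum.inl_injective.injOn fun _ _ _ _ => Sum.inl_ne_inr)]
  simp

lemma rweight_cubeMatching (w ε : ℝ) (i : Fin k) :
    rweight (pendCubeWeight k w ε) (cubeMatching k i) = 2 ^ (k - 1) * (w + ε) := by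
  rw [rweight_eq_card_mul, card_cubeMatching]
  · push_cast; rfl
  · simp only [cubeMatching, mem_image]
    rintro _ ⟨x, -, rfl⟩
    rfl

lemma rweight_pendantMatching (w ε : ℝ) (i : Fin k) :
    rweight (pendCubeWeight k w ε) (pendantMatching k i) = 2 ^ k * w := by
  rw [rweight_eq_card_mul, card_pendantMatching]
  · push_cast; rfl
  · simp only [pendantMatching, mem_image]
    rintro _ ⟨x, -, rfl⟩
    rfl

lemma disjoint_cubeMatching {i j : Fin k} (hij : i ≠ j) :
    Disjoint (cubeMatching k i) (cubeMatching k j) := by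
  simp only [cubeMatching, disjoint_left, mem_image, mem_filter, mem_univ, true_and,
    not_exists, not_and, forall_exists_index, and_imp]
  rintro _ x hx rfl y hy h
  -- compare the `i`-th, resp. `j`-th, bits of the endpoints
  rcases Sym2.eq_iff.mp h with ⟨hyx, h⟩ | ⟨hyx, hxy⟩
  · have := congrFun (Sum.inl_injective h) i
    simp_all [Sum.inl_injective hyx]
  · have := congrFun (Sum.inl_injective hyx) j
    simp_all [← Sum.inl_injective hxy, hij.symm]

lemma disjoint_pendantMatching {i j : Fin k} (hij : i ≠ j) :
    Disjoint (pendantMatching k i) (pendantMatching k j) := by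
  simp only [pendantMatching, disjoint_left, mem_image, mem_univ, true_and,
    not_exists, forall_exists_index]
  rintro _ x rfl y h
  rcases Sym2.eq_iff.mp h with ⟨-, h⟩ | ⟨h, -⟩
  · exact hij (congrArg Prod.snd (Sum.inr_injective h)).symm
  · exact Sum.inl_ne_inr h

lemma isKDisjointMatching_cubeMatching (k : ℕ) :
    IsKDisjointMatching (pendCubeGraph k) k (cubeMatching k) :=
  ⟨isMatching_cubeMatching, fun _ _ => disjoint_cubeMatching⟩

lemma isKDisjointMatching_pendantMatching (k : ℕ) :
    IsKDisjointMatching (pendCubeGraph k) k (pendantMatching k) :=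
  ⟨isMatching_pendantMatching, fun _ _ => disjoint_pendantMatching⟩

lemma sym2_mem_cubeMatching {i : Fin k} {x y : Fin k → Bool} (hne : x i ≠ y i)
    (hagree : ∀ j ≠ i, x j = y j) : s(Sum.inl x, Sum.inl y) ∈ cubeMatching k i := by
  wlog hx : x i = false generalizing x y
  · rw [Sym2.eq_swap]
    exact this hne.symm (fun j hj => (hagree j hj).symm) (by simp_all)
  have hy : y = update x i true :=
    eq_update_iff.mpr ⟨by simp_all, fun j hj => (hagree j hj).symm⟩
  exact mem_image.mpr ⟨x, by simpa using hx, by rw [hy]⟩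

lemma biUnion_cubeMatching :
    univ.biUnion (cubeMatching k)
      = (pendCubeGraph k).edgeFinset.filter (fun e => isCubeEdge k e) := by
  ext e
  simp only [mem_biUnion, mem_univ, true_and, mem_filter, SimpleGraph.mem_edgeFinset]
  constructor
  · rintro ⟨i, he⟩
    refine ⟨(isMatching_cubeMatching i).1 e he, ?_⟩
    obtain ⟨x, -, rfl⟩ := mem_image.mp he
    rfl
  · induction e using Sym2.ind with | _ u v => ?_
    rintro ⟨hadj, hcube⟩
    rcases u with x | p <;> rcases v with y | q
    · obtain ⟨i, hne, hagree⟩ := hadj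
      exact ⟨i, sym2_mem_cubeMatching hne hagree⟩
    all_goals simp [isCubeEdge] at hcube

lemma biUnion_pendantMatching :
    univ.biUnion (pendantMatching k)
      = (pendCubeGraph k).edgeFinset.filter (fun e => isPendantEdge k e) := by
  ext e
  simp only [mem_biUnion, mem_univ, true_and, mem_filter, SimpleGraph.mem_edgeFinset]
  constructor
  · rintro ⟨i, he⟩
    refine ⟨(isMatching_pendantMatching i).1 e he, ?_⟩
    obtain ⟨x, -, rfl⟩ := mem_image.mp he
    rfl
  · induction e using Sym2.ind with | _ u v => ?_
    rintro ⟨hadj, hpend⟩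
    rcases u with x | ⟨x, i⟩ <;> rcases v with y | ⟨y, i⟩
    · simp [isPendantEdge] at hpend
    · exact ⟨i, mem_image.mpr ⟨x, mem_univ x, by rw [show x = y from hadj]⟩⟩
    · exact ⟨i, mem_image.mpr ⟨x, mem_univ x, by rw [show x = y from hadj, Sym2.eq_swap]⟩⟩
    · exact hadj.elim

end PendCube

theorem pendCube_half_approx_example_general (k : ℕ) (hk : 1 ≤ k) (w ε : ℝ)
    (hw : 0 < w) :
    (((pendCubeGraph k).edgeFinset.filter (fun e => isCubeEdge k e)).card
        = 2 ^ (k - 1) * k) ∧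
    (((pendCubeGraph k).edgeFinset.filter (fun e => isPendantEdge k e)).card
        = 2 ^ k * k) ∧
    (∃ Ms : Fin k → Finset (Sym2 (PendCubeV k)),
      IsKDisjointMatching (pendCubeGraph k) k Ms ∧
      Finset.univ.biUnion Ms
        = (pendCubeGraph k).edgeFinset.filter (fun e => isCubeEdge k e) ∧
      ∑ i, rweight (pendCubeWeight k w ε) (Ms i)
        = (2 ^ (k - 1) * k : ℝ) * (w + ε)) ∧
    (∃ Ns : Fin k → Finset (Sym2 (PendCubeV k)),
      IsKDisjointMatching (pendCubeGraph k) k Ns ∧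
      Finset.univ.biUnion Ns
        = (pendCubeGraph k).edgeFinset.filter (fun e => isPendantEdge k e) ∧
      ∑ i, rweight (pendCubeWeight k w ε) (Ns i)
        = (2 ^ k * k : ℝ) * w) ∧
    ((2 ^ (k - 1) * k : ℝ) * (w + ε) / ((2 ^ k * k : ℝ) * w) = (w + ε) / (2 * w)) ∧
    Filter.Tendsto (fun ε' : ℝ => (w + ε') / (2 * w)) (nhds 0) (nhds (1 / 2)) := by
  have hM := isKDisjointMatching_cubeMatching k
  have hN := isKDisjointMatching_pendantMatching k
  refine ⟨?_, ?_, ⟨cubeMatching k, hM, biUnion_cubeMatching, ?_⟩,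
    ⟨pendantMatching k, hN, biUnion_pendantMatching, ?_⟩, ?_, ?_⟩
  · simp [← biUnion_cubeMatching, hM.card_biUnion, card_cubeMatching, mul_comm]
  · simp [← biUnion_pendantMatching, hN.card_biUnion, card_pendantMatching, mul_comm]
  · simp only [rweight_cubeMatching, sum_const, card_univ, Fintype.card_fin, nsmul_eq_mul]
    ring
  · simp only [rweight_pendantMatching, sum_const, card_univ, Fintype.card_fin, nsmul_eq_mul]
    ring
  · obtain ⟨n, rfl⟩ : ∃ n, k = n + 1 := ⟨k - 1, by omega⟩
    rw [Nat.add_sub_cancel, pow_succ]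
    field_simp
  · refine ((continuous_const.add continuous_id).div_const _).tendsto' 0 _ ?_
    simp only [Pi.add_apply, id, add_zero]
    field_simp

/-- In the hypercube-with-pendants graph with weights `w + ε` on the
`2^(k−1)·k` hypercube edges and `w` on the `2^k·k` pendant edges, the hypercube edges
form a `k`-disjoint matching of weight `2^(k−1)·k·(w+ε)`, the pendant edges form a
`k`-disjoint matching of weight `2^k·k·w`, their ratio is `(w+ε)/(2w)`, which tends
to `1/2` as `ε → 0`. -/
theorem pendCube_half_approx_example (k : ℕ) (hk : 1 ≤ k) (w ε : ℝ)
    (hw : 0 < w) (he : 0 < ε) :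
    (((pendCubeGraph k).edgeFinset.filter (fun e => isCubeEdge k e)).card
        = 2 ^ (k - 1) * k) ∧
    (((pendCubeGraph k).edgeFinset.filter (fun e => isPendantEdge k e)).card
        = 2 ^ k * k) ∧
    (∃ Ms : Fin k → Finset (Sym2 (PendCubeV k)),
      IsKDisjointMatching (pendCubeGraph k) k Ms ∧
      Finset.univ.biUnion Ms
        = (pendCubeGraph k).edgeFinset.filter (fun e => isCubeEdge k e) ∧
      ∑ i, rweight (pendCubeWeight k w ε) (Ms i)
        = (2 ^ (k - 1) * k : ℝ) * (w + ε)) ∧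
    (∃ Ns : Fin k → Finset (Sym2 (PendCubeV k)),
      IsKDisjointMatching (pendCubeGraph k) k Ns ∧
      Finset.univ.biUnion Ns
        = (pendCubeGraph k).edgeFinset.filter (fun e => isPendantEdge k e) ∧
      ∑ i, rweight (pendCubeWeight k w ε) (Ns i)
        = (2 ^ k * k : ℝ) * w) ∧
    ((2 ^ (k - 1) * k : ℝ) * (w + ε) / ((2 ^ k * k : ℝ) * w) = (w + ε) / (2 * w)) ∧
    Filter.Tendsto (fun ε' : ℝ => (w + ε') / (2 * w)) (nhds 0) (nhds (1 / 2)) :=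
  pendCube_half_approx_example_general k hk w ε hw
end

section
/- For a graph G with m edges and unit edge weights, if the chromatic index of G is greater than 3, then every 3-disjoint matching in G has weight at most m − 1; and if the chromatic index of G is 3, then there exists a 3-disjoint matching of weight exactly m. Consequently, any algorithm guaranteed to output a 3-disjoint matching of weight strictly greater than (1 − 1/m)·OPT decides whether the chromatic index of G is at most 3. -/
open Finset

variable {V : Type*}

section Aux

variable [Fintype V] [DecidableEq V] (G : SimpleGraph V) [DecidableRel G.Adj]

lemma aux_sum_le {Ms : Fin 3 → Finset (Sym2 V)} (h : IsKDisjointMatching G 3 Ms) :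
    ∑ i, (Ms i).card ≤ G.edgeFinset.card := by
  have hcard : (Finset.univ.biUnion Ms).card = ∑ i, (Ms i).card :=
    Finset.card_biUnion (fun i _ j _ hij => h.2 hij)
  rw [← hcard]
  apply Finset.card_le_card
  intro e he
  obtain ⟨i, _, hi⟩ := Finset.mem_biUnion.mp he
  exact SimpleGraph.mem_edgeFinset.mpr ((h.1 i).1 e hi)

lemma aux_eq_union {Ms : Fin 3 → Finset (Sym2 V)} (h : IsKDisjointMatching G 3 Ms)
    (heq : ∑ i, (Ms i).card = G.edgeFinset.card) :
    Finset.univ.biUnion Ms = G.edgeFinset := by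
  have hcard : (Finset.univ.biUnion Ms).card = ∑ i, (Ms i).card :=
    Finset.card_biUnion (fun i _ j _ hij => h.2 hij)
  apply Finset.eq_of_subset_of_card_le
  · intro e he
    obtain ⟨i, _, hi⟩ := Finset.mem_biUnion.mp he
    exact SimpleGraph.mem_edgeFinset.mpr ((h.1 i).1 e hi)
  · omega

lemma aux_coloring_of_eq {Ms : Fin 3 → Finset (Sym2 V)} (h : IsKDisjointMatching G 3 Ms)
    (heq : ∑ i, (Ms i).card = G.edgeFinset.card) :
    ∃ c : Sym2 V → Fin 3, ProperColoringOn 3 G.edgeFinset c := by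
  classical
  refine ⟨fun e => if e ∈ Ms 0 then 0 else if e ∈ Ms 1 then 1 else 2, ?_⟩
  have hun := aux_eq_union G h heq
  have hmem : ∀ e ∈ G.edgeFinset,
      e ∈ Ms (if e ∈ Ms 0 then 0 else if e ∈ Ms 1 then 1 else 2) := by
    intro e he
    rw [← hun] at he
    obtain ⟨i, _, hi⟩ := Finset.mem_biUnion.mp he
    by_cases h0 : e ∈ Ms 0
    · simp [h0]
    by_cases h1 : e ∈ Ms 1
    · simp [h0, h1]
    · simp only [h0, h1, if_false]
      fin_cases i <;> first | exact hi | exact absurd hi h0 | exact absurd hi h1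
  intro e he f hf hef ⟨x, hxe, hxf⟩ hc
  have he' := hmem e he
  have hf' := hmem f hf
  simp only at hc
  rw [hc] at he'
  exact (h.1 _).2 f hf' e he' (Ne.symm hef) x hxf hxe

lemma aux_eq_of_coloring (hc : ∃ c : Sym2 V → Fin 3, ProperColoringOn 3 G.edgeFinset c) :
    ∃ Ms : Fin 3 → Finset (Sym2 V), IsKDisjointMatching G 3 Ms ∧
      ∑ i, (Ms i).card = G.edgeFinset.card := by
  classical
  obtain ⟨c, hc⟩ := hc
  refine ⟨fun i => G.edgeFinset.filter (fun e => c e = i), ⟨⟨fun i => ⟨?_, ?_⟩, ?_⟩, ?_⟩⟩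
  · intro e he
    exact SimpleGraph.mem_edgeFinset.mp (Finset.mem_filter.mp he).1
  · intro e he f hf hef v hve hvf
    obtain ⟨he1, he2⟩ := Finset.mem_filter.mp he
    obtain ⟨hf1, hf2⟩ := Finset.mem_filter.mp hf
    exact hc e he1 f hf1 hef ⟨v, hve, hvf⟩ (he2.trans hf2.symm)
  · intro i j hij
    simp only [Finset.disjoint_left, Finset.mem_filter]
    rintro e ⟨_, he⟩ ⟨_, hf⟩
    exact hij (he.symm.trans hf)
  · exact (Finset.card_eq_sum_card_fiberwise (fun e _ => Finset.mem_univ (c e))).symm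

end Aux

/-- With unit weights and `m = |E(G)| > 0`: if the chromatic index of `G`
exceeds 3 (no proper 3-edge-coloring), every 3-disjoint matching has weight at most
`m − 1`; if the chromatic index is at most 3, some 3-disjoint matching has weight
exactly `m`. Consequently, any 3-disjoint matching of weight strictly greater than
`(1 − 1/m)·OPT` has weight `m` iff the chromatic index is at most 3. -/
theorem three_disjoint_inapproximability
    [Fintype V] [DecidableEq V] (G : SimpleGraph V) [DecidableRel G.Adj]
    (hm : 0 < G.edgeFinset.card) :
    ((¬ ∃ c : Sym2 V → Fin 3, ProperColoringOn 3 G.edgeFinset c) →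
      ∀ Ms : Fin 3 → Finset (Sym2 V), IsKDisjointMatching G 3 Ms →
        ∑ i, (Ms i).card ≤ G.edgeFinset.card - 1) ∧
    ((∃ c : Sym2 V → Fin 3, ProperColoringOn 3 G.edgeFinset c) →
      ∃ Ms : Fin 3 → Finset (Sym2 V), IsKDisjointMatching G 3 Ms ∧
        ∑ i, (Ms i).card = G.edgeFinset.card) ∧
    (∀ OPT : ℕ, IsGreatest {n | ∃ Ms : Fin 3 → Finset (Sym2 V),
          IsKDisjointMatching G 3 Ms ∧ ∑ i, (Ms i).card = n} OPT →
      ∀ Ms : Fin 3 → Finset (Sym2 V), IsKDisjointMatching G 3 Ms →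
        (1 - 1 / (G.edgeFinset.card : ℝ)) * (OPT : ℝ) < (∑ i, (Ms i).card : ℕ) →
        ((∃ c : Sym2 V → Fin 3, ProperColoringOn 3 G.edgeFinset c) ↔
          ∑ i, (Ms i).card = G.edgeFinset.card)) := by
  have m := G.edgeFinset.card
  refine ⟨?_, aux_eq_of_coloring G, ?_⟩
  · intro hnc Ms hMs
    have hle := aux_sum_le G hMs
    rcases lt_or_eq_of_le hle with h | h
    · omega
    · exact absurd (aux_coloring_of_eq G hMs h) hnc
  · intro OPT hOPT Ms hMs happrox
    constructor
    · intro hcol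
      obtain ⟨Ms', hMs', hsum'⟩ := aux_eq_of_coloring G hcol
      have hge : G.edgeFinset.card ≤ OPT := hOPT.2 ⟨Ms', hMs', hsum'⟩
      obtain ⟨Ms'', hMs'', hsum''⟩ := hOPT.1
      have hle : OPT ≤ G.edgeFinset.card := hsum'' ▸ aux_sum_le G hMs''
      have hO : OPT = G.edgeFinset.card := le_antisymm hle hge
      subst hO
      have hmr : (0:ℝ) < (G.edgeFinset.card : ℝ) := by exact_mod_cast hm
      rw [sub_mul, one_mul, div_mul_cancel₀ _ (ne_of_gt hmr)] at happrox
      have : (G.edgeFinset.card : ℝ) < (∑ i, (Ms i).card : ℕ) + 1 := by linarith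
      have h2 : G.edgeFinset.card < (∑ i, (Ms i).card) + 1 := by exact_mod_cast this
      have h3 := aux_sum_le G hMs
      omega
    · intro hsum
      exact aux_coloring_of_eq G hMs hsum
end
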